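/- The non-symmetric Macdonald polynomial specialization E_λ(x; q=1, t=0), defined as the generating function over coinversion-free fillings of partition shape λ with key basement w0 weighted by x^F (ignoring major index since q=1), equals the elementary symmetric function e_{λ'}(x_1,...,x_n), where λ' is the conjugate partition of λ. -/

import Mathlib

namespace Paper

/-! ## Augmented fillings, triples, major index (HHL model) -/

/-- Tie-broken strict order on (value, subscript) pairs: equal values are
ordered by subscript. -/
def tlt (x y : ℕ × ℕ) : Prop := x.1 < y.1 ∨ (x.1 = y.1 ∧ x.2 < y.2)

/-- `cyc x y z`: the three tie-broken values, read increasingly, follow the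
cyclic order x → y → z. -/
def cyc (x y z : ℕ × ℕ) : Prop :=
  (tlt x y ∧ tlt y z) ∨ (tlt y z ∧ tlt z x) ∨ (tlt z x ∧ tlt x y)

variable {n : ℕ}

/-- A type A triple: `a = (r, j-1)`, `b = (r, j)`, `c = (r', j)` with `r'` below `r`
and the row of `a, b` at least as long as that of `c`. -/
def typeA (α : Fin n → ℕ) (r r' : Fin n) (j : ℕ) : Prop :=
  r < r' ∧ 1 ≤ j ∧ j ≤ α r ∧ j ≤ α r' ∧ α r' ≤ α r

/-- A type B triple: `a = (r, j-1)`, `b = (r, j)`, `c = (r', j-1)` with `r'` above `r`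
and the row of `a, b` strictly longer than that of `c`. -/
def typeB (α : Fin n → ℕ) (r r' : Fin n) (j : ℕ) : Prop :=
  r' < r ∧ 1 ≤ j ∧ j ≤ α r ∧ j - 1 ≤ α r' ∧ α r' < α r

/-- A type A triple is an inversion triple if the entries ordered increasingly
(with subscripts a₃, b₁, c₂ breaking ties) follow the counterclockwise cycle b → a → c. -/
def invA (F : Fin n → ℕ → ℕ) (r r' : Fin n) (j : ℕ) : Prop :=
  cyc (F r j, 1) (F r (j-1), 3) (F r' j, 2)

/-- A type B triple is an inversion triple if the entries ordered increasingly
(with subscripts c₂, a₃, b₁ breaking ties) follow the clockwise cycle c → b → a. -/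
def invB (F : Fin n → ℕ → ℕ) (r r' : Fin n) (j : ℕ) : Prop :=
  cyc (F r' (j-1), 2) (F r j, 1) (F r (j-1), 3)

/-- Coinversion-free: every type A and type B triple is an inversion triple. -/
def CoinvFree (α : Fin n → ℕ) (F : Fin n → ℕ → ℕ) : Prop :=
  (∀ r r' j, typeA α r r' j → invA F r r' j) ∧
  (∀ r r' j, typeB α r r' j → invB F r r' j)

/-- Inversion-free: no type A or type B triple is an inversion triple. -/
def InvFree (α : Fin n → ℕ) (F : Fin n → ℕ → ℕ) : Prop :=
  (∀ r r' j, typeA α r r' j → ¬ invA F r r' j) ∧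
  (∀ r r' j, typeB α r r' j → ¬ invB F r r' j)

/-- The major index: the sum of `leg(u) + 1` over all descents `u`
(non-basement boxes whose entry strictly exceeds that of their left neighbour). -/
def maj (α : Fin n → ℕ) (F : Fin n → ℕ → ℕ) : ℕ :=
  ∑ i : Fin n, ∑ j ∈ Finset.Icc 1 (α i), if F i (j-1) < F i j then α i - j + 1 else 0

/-- The non-basement part of a filling of shape `α`, with entries encoded as
`Fin n` (representing the values `1, …, n`). -/
abbrev Fill (n : ℕ) (α : Fin n → ℕ) := (i : Fin n) → Fin (α i) → Fin n

/-- The entry of the augmented filling at row `i`, column `j`; column `0` is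
the basement `σ`, and column `j ≥ 1` holds the value `G i (j-1) + 1 ∈ {1, …, n}`. -/
def entry (α : Fin n → ℕ) (σ : Fin n → ℕ) (G : Fill n α) : Fin n → ℕ → ℕ :=
  fun i j => if j = 0 then σ i else if h : j - 1 < α i then ((G i ⟨j - 1, h⟩ : ℕ) + 1) else 0

/-- The key basement `w₀ = (n, n-1, …, 1)`, read top to bottom. -/
def keyBasement (n : ℕ) : Fin n → ℕ := fun i => n - (i : ℕ)

/-- The reversal on `Fin n` (0-indexed version of `i ↦ n + 1 - i`). -/
def revFin {n : ℕ} (k : Fin n) : Fin n := ⟨n - 1 - (k : ℕ), by have := k.isLt; omega⟩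

/-- The set of entries of the `j`-th (non-basement, `j ≥ 1`) column. -/
def colFinset (α : Fin n → ℕ) (σ : Fin n → ℕ) (G : Fill n α) (j : ℕ) : Finset ℕ :=
  (Finset.univ.filter (fun i : Fin n => j ≤ α i)).image (fun i => entry α σ G i j)

/-- The multiset of entries of the `j`-th (non-basement, `j ≥ 1`) column. -/
def colMultiset (α : Fin n → ℕ) (σ : Fin n → ℕ) (G : Fill n α) (j : ℕ) : Multiset ℕ :=
  (Finset.univ.filter (fun i : Fin n => j ≤ α i)).val.map (fun i => entry α σ G i j)

/-- The multiset of all non-basement entries (the weight of the filling). -/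
def allEntries (α : Fin n → ℕ) (G : Fill n α) : Multiset ℕ :=
  ∑ i : Fin n, ((Finset.univ : Finset (Fin (α i))).val.map (fun j => (G i j : ℕ) + 1))

/-- The largest part of `α`. -/
def maxPart (α : Fin n → ℕ) : ℕ := Finset.univ.sup α

/-- The down-increasing condition on a column with entries `d` (top), `e` (middle),
`f` (bottom): `e > d > f` or `d > f > e` or `f > e > d`. -/
def downInc (d e f : ℕ) : Prop := (f < d ∧ d < e) ∨ (e < f ∧ f < d) ∨ (d < e ∧ e < f)

/-! ## Generating polynomials; the variables `x_1, x_2, …` are indexed by `ℕ`,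
and `q` is the variable of the coefficient ring `ℤ[q]`. -/

/-- The monomial `x^F` of a filling. -/
noncomputable def xwt (α : Fin n → ℕ) (G : Fill n α) : MvPolynomial ℕ (Polynomial ℤ) :=
  ∏ i : Fin n, ∏ j : Fin (α i), MvPolynomial.X ((G i j : ℕ) + 1)

open Classical in
/-- `E^σ_α(x; q, 0) = Σ_{F coinversion-free} q^{maj F} x^F`. -/
noncomputable def Epoly (α σ : Fin n → ℕ) : MvPolynomial ℕ (Polynomial ℤ) :=
  ∑ G : Fill n α, if CoinvFree α (entry α σ G) then
    MvPolynomial.C (Polynomial.X ^ maj α (entry α σ G)) * xwt α G else 0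

open Classical in
/-- `H̃^σ_α(x; q, 0) = Σ_{F inversion-free} q^{maj F} x^F`. -/
noncomputable def Hpoly (α σ : Fin n → ℕ) : MvPolynomial ℕ (Polynomial ℤ) :=
  ∑ G : Fill n α, if InvFree α (entry α σ G) then
    MvPolynomial.C (Polynomial.X ^ maj α (entry α σ G)) * xwt α G else 0

/-! ## Tableaux and Schur polynomials -/

/-- A filling of the diagram of `ν` with entries in `Fin N` (values `1, …, N`). -/
abbrev Tab (m : ℕ) (ν : Fin m → ℕ) (N : ℕ) := (i : Fin m) → Fin (ν i) → Fin N

/-- Semistandardness: rows weakly increase, columns strictly increase. -/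
def IsSSYT {m N : ℕ} (ν : Fin m → ℕ) (T : Tab m ν N) : Prop :=
  (∀ i : Fin m, ∀ j j' : Fin (ν i), j ≤ j' → T i j ≤ T i j') ∧
  (∀ i i' : Fin m, i < i' → ∀ j : Fin (ν i'), ∀ hj : (j : ℕ) < ν i, T i ⟨j, hj⟩ < T i' j)

/-- Number of occurrences of the value `v` in the tableau. -/
def tabCount {m N : ℕ} (ν : Fin m → ℕ) (T : Tab m ν N) (v : Fin N) : ℕ :=
  ∑ i : Fin m, (Finset.univ.filter (fun j : Fin (ν i) => T i j = v)).card

/-- The monomial `x^T` of a tableau. -/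
noncomputable def xwtTab {m N : ℕ} (ν : Fin m → ℕ) (T : Tab m ν N) :
    MvPolynomial ℕ (Polynomial ℤ) :=
  ∏ i : Fin m, ∏ j : Fin (ν i), MvPolynomial.X ((T i j : ℕ) + 1)

open Classical in
/-- The Schur polynomial `s_ν(x_1, …, x_N)` as the generating function of SSYT. -/
noncomputable def schurPoly (m : ℕ) (ν : Fin m → ℕ) (N : ℕ) : MvPolynomial ℕ (Polynomial ℤ) :=
  ∑ T : Tab m ν N, if IsSSYT ν T then xwtTab ν T else 0

/-- The reading word of a tableau: rows left to right, bottom row first. -/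
def readingWord {m N : ℕ} (ν : Fin m → ℕ) (T : Tab m ν N) : List ℕ :=
  ((List.finRange m).reverse).flatMap
    (fun i => (List.finRange (ν i)).map (fun j => (T i j : ℕ) + 1))

/-- The conjugate shape: `ν'_j = #{i : ν_i ≥ j}`. -/
def conjShape (m : ℕ) (ν : Fin m → ℕ) : Fin m → ℕ :=
  fun j => (Finset.univ.filter (fun i => (j : ℕ) + 1 ≤ ν i)).card

/-! ## Charge and cocharge of words -/

/-- Minimum of a list, if nonempty. -/
def listMin : List ℕ → Option ℕ
  | [] => none
  | a :: t => match listMin t with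
    | none => some a
    | some b => some (min a b)

/-- The major index of a list: the sum of the (1-indexed) positions of descents. -/
def majList (l : List ℕ) : ℕ :=
  (List.range (l.length - 1)).foldl
    (fun acc i => if l.getD (i+1) 0 < l.getD i 0 then acc + i + 1 else acc) 0

/-- The inverse of a word `w` that is a permutation of `1, …, k`:
its `v`-th letter is the (1-indexed) position of `v` in `w`. -/
def invPerm (w : List ℕ) : List ℕ :=
  (List.range w.length).map (fun v => w.idxOf (v+1) + 1)

/-- Charge of a permutation word: `maj(reverse(w⁻¹))`. -/
def chargePerm (w : List ℕ) : ℕ := majList (invPerm w).reverse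

/-- Cocharge of a permutation word: the binomial maximum minus the charge. -/
def cochargePerm (w : List ℕ) : ℕ := w.length.choose 2 - chargePerm w

/-- Largest index `< p` where `w` has the letter `t`. -/
def findBelow (w : List ℕ) (p t : ℕ) : Option ℕ :=
  ((List.range p).filter (fun i => w.getD i 0 == t)).getLast?

/-- Largest index where `w` has the letter `t` (used for wrap-around). -/
def findAny (w : List ℕ) (t : ℕ) : Option ℕ :=
  ((List.range w.length).filter (fun i => w.getD i 0 == t)).getLast?

/-- Extraction scan: from position `p`, scanning right to left (wrapping around if
necessary) find the letter `t`, then continue with the next larger letter value. -/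
def extractGo (w : List ℕ) : ℕ → ℕ → ℕ → List ℕ → List ℕ
  | 0, _, _, acc => acc
  | fuel+1, p, t, acc =>
    match (match findBelow w p t with | some i => some i | none => findAny w t) with
    | none => acc
    | some i =>
      match listMin (w.filter (fun x => decide (t < x))) with
      | none => i :: acc
      | some t' => extractGo w fuel i t' (i :: acc)

/-- Indices of the first standard subword of `w` (rightmost occurrence of the
smallest letter, then the right-to-left wrap-around scan up to the largest letter). -/
def extractIndices (w : List ℕ) : List ℕ :=
  match listMin w with
  | none => []
  | some v0 => extractGo w w.length w.length v0 []

/-- The standard subword decomposition of a word (with fuel). -/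
def subwordsGo : ℕ → List ℕ → List (List ℕ)
  | 0, _ => []
  | fuel+1, w =>
    if w.isEmpty then [] else
    let I := extractIndices w
    let sub := ((List.range w.length).filter (fun i => I.contains i)).map (fun i => w.getD i 0)
    let rest := ((List.range w.length).filter (fun i => !(I.contains i))).map (fun i => w.getD i 0)
    sub :: subwordsGo fuel rest

/-- The standard subwords of a word. -/
def subwords (w : List ℕ) : List (List ℕ) := subwordsGo w.length w

/-- Charge of a word: the sum of the charges of its standard subwords. -/
def chargeWord (w : List ℕ) : ℕ := ((subwords w).map chargePerm).sum

/-- Cocharge of a word: the sum of the cocharges of its standard subwords. -/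
def cochargeWord (w : List ℕ) : ℕ := ((subwords w).map cochargePerm).sum

/-- The charge word `cw(F)`: list the entries in increasing order (ties broken by
increasing column index) and record their column indices. -/
def cw (α σ : Fin n → ℕ) (G : Fill n α) : List ℕ :=
  (List.range n).flatMap (fun v =>
    (List.range (maxPart α)).filterMap (fun j =>
      if ∃ i : Fin n, j + 1 ≤ α i ∧ entry α σ G i (j+1) = v + 1 then some (j+1) else none))

/-- The cocharge word `ccw(F)`: list the entries in decreasing order (ties broken by
increasing column index, with multiplicity) and record their column indices. -/
def ccw (α σ : Fin n → ℕ) (G : Fill n α) : List ℕ :=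
  ((List.range n).reverse).flatMap (fun v =>
    (List.range (maxPart α)).flatMap (fun j =>
      List.replicate ((Finset.univ.filter
        (fun i : Fin n => j + 1 ≤ α i ∧ entry α σ G i (j+1) = v + 1)).card) (j+1)))

/-! ## Two-row fillings as lists (including the basement at index 0) -/

/-- The entry function of a two-row filling with top row `T` and bottom row `B`
(both including their basement entry at index 0). -/
def twoRowEntry (T B : List ℕ) : Fin 2 → ℕ → ℕ :=
  fun i j => if i.val = 0 then T.getD j 0 else B.getD j 0

/-- The multiset of entries in column `j` of a two-row filling. -/
def colM (T B : List ℕ) (j : ℕ) : Multiset ℕ :=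
  (if j < T.length then {T.getD j 0} else 0) + (if j < B.length then {B.getD j 0} else 0)

/-- The filling rule at a two-entry column `{A, B}` with bottom reference entry `C`,
returning (bottom entry, top entry): the least entry greater than `C` goes to the
bottom if one exists, otherwise the smallest entry goes to the bottom. -/
def phiRule (C A B : ℕ) : ℕ × ℕ :=
  if C < A ∧ C < B then (min A B, max A B)
  else if C < A then (A, B)
  else if C < B then (B, A)
  else (min A B, max A B)

/-- Process the two-entry columns right to left (input and output reversed),
threading the current bottom reference entry `C`. -/
def phiPairs : List (ℕ × ℕ) → ℕ → List (ℕ × ℕ)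
  | [], _ => []
  | (A, B) :: r, C =>
    let q := phiRule C A B
    q :: phiPairs r q.1

/-- The filling-rule map `φ` on a two-row filling with rows `T` (long, incl. basement)
and `B` (short, incl. basement): single-entry columns go to the bottom row, two-entry
columns are resolved by `phiRule`, processing right to left.
Returns (new long bottom row, new short top row). -/
def phi (T B : List ℕ) : List ℕ × List ℕ :=
  let k := B.length
  let tail := T.drop k
  let C0 := T.getD k 0
  let res := (phiPairs ((T.take k).zip B).reverse C0).reverse
  (res.map Prod.fst ++ tail, res.map Prod.snd)

/-!
For a partition shape there are no type B triples, and a type A triple `a b / c` (with `a` left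
of `b` and `c` below `b`) is an inversion triple iff, counting cyclically downward from `a` in
`{0, …, n}`, one meets `b` before `c`. So in a coinversion-free filling each column is filled
greedily from the top, given the column to its left: each row takes, among the entries of the
column not used higher up, the first one met going cyclically down from its left neighbour.
Hence a coinversion-free filling is determined by the sets of entries of its columns, and these
sets range over all tuples of subsets of `{1, …, n}` of sizes `λ'_j`. None of this depends on
the basement.
-/

open Finset MvPolynomial

section Greedy

variable {ι β : Type*} [LinearOrder ι] {key key' : ι → β → ℕ} {R : Finset ι} {b b' : ι → β}

/-- Each row `r ∈ R` takes, among the values left by the rows above it, the `key r`-least one. -/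
def IsGreedy (key : ι → β → ℕ) (R : Finset ι) (b : ι → β) : Prop :=
  ∀ r ∈ R, ∀ r' ∈ R, r < r' → key r (b r) < key r (b r')

lemma IsGreedy.mono {R' : Finset ι} (h : IsGreedy key R b) (hR : R' ⊆ R) : IsGreedy key R' b :=
  fun r hr r' hr' => h r (hR hr) r' (hR hr')

lemma IsGreedy.congr (h : IsGreedy key R b) (hkey : ∀ r ∈ R, key r = key' r)
    (hb : ∀ r ∈ R, b r = b' r) : IsGreedy key' R b' := by
  intro r hr r' hr' hlt
  rw [← hkey r hr, ← hb r hr, ← hb r' hr']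
  exact h r hr r' hr' hlt

lemma IsGreedy.injOn (h : IsGreedy key R b) : Set.InjOn b R := by
  intro r hr r' hr' he
  by_contra hne
  rcases lt_or_gt_of_ne hne with hlt | hlt
  · exact (h r hr r' hr' hlt).ne (congrArg (key r) he)
  · exact (h r' hr' r hr hlt).ne (congrArg (key r') he.symm)

variable [DecidableEq β]

lemma IsGreedy.key_lt_of_mem_image {a : ι} {s : Finset ι} {x : β}
    (h : IsGreedy key (insert a s) b) (ha : ∀ r ∈ s, a < r) (hx : x ∈ (insert a s).image b)
    (hne : x ≠ b a) : key a (b a) < key a x := by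
  obtain ⟨r, hr, rfl⟩ := mem_image.1 hx
  rcases mem_insert.1 hr with rfl | hrs
  · exact absurd rfl hne
  · exact h a (mem_insert_self a s) r hr (ha r hrs)

lemma IsGreedy.eqOn_of_image_eq (h : IsGreedy key R b) (h' : IsGreedy key R b')
    (him : R.image b = R.image b') : Set.EqOn b b' R := by
  induction R using Finset.induction_on_min with
  | empty => simp
  | insert a s ha ih =>
    have hfirst : b a = b' a := by
      by_contra hne
      have h₁ := h.key_lt_of_mem_image ha (him ▸ mem_image_of_mem b' (mem_insert_self a s))
        (Ne.symm hne)
      have h₂ := h'.key_lt_of_mem_image ha (him ▸ mem_image_of_mem b (mem_insert_self a s)) hne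
      omega
    have hnotMem : ∀ {c : ι → β}, IsGreedy key (insert a s) c → c a ∉ s.image c := by
      intro c hc hmem
      obtain ⟨t, ht, hct⟩ := mem_image.1 hmem
      exact (ha t ht).ne (hc.injOn (mem_insert_self a s) (mem_insert_of_mem ht) hct.symm)
    have hrest : s.image b = s.image b' := by
      rw [← erase_insert (hnotMem h), ← erase_insert (hnotMem h'), ← image_insert,
        ← image_insert, him, hfirst]
    intro r hr
    rcases mem_insert.1 hr with rfl | hrs
    · exact hfirst
    · exact ih (h.mono (subset_insert a s)) (h'.mono (subset_insert a s)) hrest hrs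

lemma exists_isGreedy_image_eq [Nonempty β] (S : Finset β) (hkey : ∀ r ∈ R, Set.InjOn (key r) S)
    (hcard : S.card = R.card) : ∃ b, IsGreedy key R b ∧ R.image b = S := by
  induction R using Finset.induction_on_min generalizing S with
  | empty =>
    exact ⟨fun _ => Classical.arbitrary β, fun r hr => absurd hr (notMem_empty r),
      by simpa using (card_eq_zero.1 hcard).symm⟩
  | insert a s ha ih =>
    have has : a ∉ s := fun h => lt_irrefl a (ha a h)
    rw [card_insert_of_notMem has] at hcard
    obtain ⟨x₀, hx₀, hmin⟩ := S.exists_min_image (key a) (card_pos.1 (by omega))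
    obtain ⟨b, hb, himage⟩ := ih (S.erase x₀)
      (fun r hr => (hkey r (mem_insert_of_mem hr)).mono (erase_subset x₀ S))
      (by rw [card_erase_of_mem hx₀]; omega)
    refine ⟨Function.update b a x₀, ?_, ?_⟩
    · intro r hr r' hr' hlt
      have hr's : r' ∈ s := by
        rcases mem_insert.1 hr' with rfl | hr's
        · rcases mem_insert.1 hr with rfl | hrs
          exacts [absurd hlt (lt_irrefl r), absurd hlt (ha r hrs).not_gt]
        · exact hr's
      have hbr' : b r' ∈ S.erase x₀ := himage ▸ mem_image_of_mem b hr's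
      rw [Function.update_of_ne (ha r' hr's).ne']
      rcases mem_insert.1 hr with rfl | hrs
      · rw [Function.update_self]
        refine (hmin _ (mem_of_mem_erase hbr')).lt_of_ne fun he => ne_of_mem_erase hbr' ?_
        exact hkey r (mem_insert_self r s) (mem_of_mem_erase hbr') hx₀ he.symm
      · rw [Function.update_of_ne (ha r hrs).ne']
        exact hb r hrs r' hr's hlt
    · rw [image_insert, Function.update_self,
        image_congr fun r hr => Function.update_of_ne (ha r hr).ne' x₀ b, himage,
        insert_erase hx₀]

end Greedy

def cycDist (n a x : ℕ) : ℕ := if x ≤ a then a - x else n + 1 + a - x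

lemma cycDist_injOn (n a : ℕ) : Set.InjOn (cycDist n a) (Set.Iic n) := by
  intro x hx y hy h
  simp only [Set.mem_Iic] at hx hy
  unfold cycDist at h
  split_ifs at h <;> omega

lemma cyc_iff_cycDist_lt {a x y : ℕ} (hx : x ≤ n) (hy : y ≤ n) :
    cyc (x, 1) (a, 3) (y, 2) ↔ cycDist n a x < cycDist n a y := by
  unfold cyc tlt cycDist
  split_ifs <;> omega

section Fillings

variable {lam : Fin n → ℕ} (σ : Fin n → ℕ)

def colRows (lam : Fin n → ℕ) (j : ℕ) : Finset (Fin n) :=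
  univ.filter fun i => j ≤ lam i

lemma colRows_succ_subset (lam : Fin n → ℕ) (j : ℕ) : colRows lam (j + 1) ⊆ colRows lam j :=
  fun i hi => mem_filter.2 ⟨mem_univ i, Nat.le_of_succ_le (mem_filter.1 hi).2⟩

lemma le_maxPart (lam : Fin n → ℕ) (i : Fin n) : lam i ≤ maxPart lam :=
  le_sup (mem_univ i)

lemma colFinset_eq_image (G : Fill n lam) (j : ℕ) :
    colFinset lam σ G j = (colRows lam j).image (entry lam σ G · j) :=
  rfl

lemma entry_zero (G : Fill n lam) (i : Fin n) : entry lam σ G i 0 = σ i := by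
  simp [entry]

lemma entry_succ (G : Fill n lam) {i : Fin n} {k : ℕ} (h : k < lam i) :
    entry lam σ G i (k + 1) = (G i ⟨k, h⟩ : ℕ) + 1 := by
  simp [entry, h]

lemma entry_succ_le (G : Fill n lam) (i : Fin n) (k : ℕ) : entry lam σ G i (k + 1) ≤ n := by
  by_cases h : k < lam i
  · rw [entry_succ σ G h]
    exact (G i ⟨k, h⟩).isLt
  · simp [entry, h]

lemma entry_mem_Icc (G : Fill n lam) {i : Fin n} {j : ℕ} (hj : 1 ≤ j) (h : j ≤ lam i) :
    entry lam σ G i j ∈ Icc 1 n := by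
  obtain ⟨k, rfl⟩ : ∃ k, j = k + 1 := ⟨j - 1, by omega⟩
  rw [entry_succ σ G h, mem_Icc]
  have := (G i ⟨k, h⟩).isLt
  omega

variable {σ}

lemma coinvFree_iff_isGreedy (hlam : Antitone lam) (G : Fill n lam) :
    CoinvFree lam (entry lam σ G) ↔ ∀ j, IsGreedy (fun r => cycDist n (entry lam σ G r j))
      (colRows lam (j + 1)) (fun r => entry lam σ G r (j + 1)) := by
  constructor
  · intro h j r hr r' hr' hlt
    have hA : typeA lam r r' (j + 1) :=
      ⟨hlt, by omega, (mem_filter.1 hr).2, (mem_filter.1 hr').2, hlam hlt.le⟩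
    have := h.1 r r' (j + 1) hA
    rwa [invA, Nat.add_sub_cancel, cyc_iff_cycDist_lt (entry_succ_le σ G r j)
      (entry_succ_le σ G r' j)] at this
  · refine fun h => ⟨?_, ?_⟩
    · rintro r r' j ⟨hlt, hj, hr, hr', -⟩
      obtain ⟨k, rfl⟩ : ∃ k, j = k + 1 := ⟨j - 1, by omega⟩
      rw [invA, Nat.add_sub_cancel, cyc_iff_cycDist_lt (entry_succ_le σ G r k)
        (entry_succ_le σ G r' k)]
      exact h k r (mem_filter.2 ⟨mem_univ r, hr⟩) r' (mem_filter.2 ⟨mem_univ r', hr'⟩) hlt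
    · rintro r r' j ⟨hlt, -, -, -, hlen⟩
      exact absurd (hlam hlt.le) hlen.not_ge

lemma colFinset_mem_powersetCard (hlam : Antitone lam) {G : Fill n lam}
    (hG : CoinvFree lam (entry lam σ G)) {j : ℕ} (hj : 1 ≤ j) :
    colFinset lam σ G j ∈ (Icc 1 n).powersetCard (colRows lam j).card := by
  obtain ⟨k, rfl⟩ : ∃ k, j = k + 1 := ⟨j - 1, by omega⟩
  rw [mem_powersetCard, colFinset_eq_image]
  exact ⟨image_subset_iff.2 fun i hi => entry_mem_Icc σ G hj (mem_filter.1 hi).2,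
    card_image_of_injOn ((coinvFree_iff_isGreedy hlam G).1 hG k).injOn⟩

lemma eq_of_coinvFree_of_colFinset_eq (hlam : Antitone lam) {G G' : Fill n lam}
    (hG : CoinvFree lam (entry lam σ G)) (hG' : CoinvFree lam (entry lam σ G'))
    (hcol : ∀ j ∈ Icc 1 (maxPart lam), colFinset lam σ G j = colFinset lam σ G' j) :
    G = G' := by
  have hentry : ∀ j, ∀ i ∈ colRows lam j, entry lam σ G i j = entry lam σ G' i j := by
    intro j
    induction j with
    | zero => intro i _; simp only [entry_zero]
    | succ j ih =>
      have hgreedy := (coinvFree_iff_isGreedy hlam G).1 hG j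
      have hgreedy' : IsGreedy (fun r => cycDist n (entry lam σ G r j)) (colRows lam (j + 1))
          (fun r => entry lam σ G' r (j + 1)) :=
        ((coinvFree_iff_isGreedy hlam G').1 hG' j).congr
          (fun r hr => by simp only [ih r (colRows_succ_subset lam j hr)]) (fun _ _ => rfl)
      intro i hi
      exact hgreedy.eqOn_of_image_eq hgreedy'
        (hcol (j + 1) (mem_Icc.2 ⟨by omega, (mem_filter.1 hi).2.trans (le_maxPart lam i)⟩)) hi
  funext i k
  have := hentry (k + 1) i (mem_filter.2 ⟨mem_univ i, k.isLt⟩)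
  rw [entry_succ σ G k.isLt, entry_succ σ G' k.isLt] at this
  exact Fin.ext (by simpa using this)

end Fillings

section Construction

variable (lam : Fin n → ℕ) (σ : Fin n → ℕ) (p : ℕ → Finset ℕ)

noncomputable def greedyCols : ℕ → Fin n → ℕ
  | 0 => σ
  | j + 1 => Classical.epsilon fun b => IsGreedy (fun r => cycDist n (greedyCols j r))
      (colRows lam (j + 1)) b ∧ (colRows lam (j + 1)).image b = p (j + 1)

-- `entry` adds the `1` back; `% n` only serves to land in `Fin n`.
noncomputable def greedyFill : Fill n lam :=
  fun i k => ⟨(greedyCols lam σ p (k + 1) i - 1) % n, Nat.mod_lt _ i.pos⟩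

variable {lam σ p}
  (hp : ∀ j ∈ Icc 1 (maxPart lam), p j ∈ (Icc 1 n).powersetCard (colRows lam j).card)
include hp

lemma greedyCols_spec {j : ℕ} (hj : j + 1 ≤ maxPart lam) :
    IsGreedy (fun r => cycDist n (greedyCols lam σ p j r)) (colRows lam (j + 1))
        (greedyCols lam σ p (j + 1)) ∧
      (colRows lam (j + 1)).image (greedyCols lam σ p (j + 1)) = p (j + 1) := by
  obtain ⟨hsub, hcard⟩ := mem_powersetCard.1 (hp (j + 1) (mem_Icc.2 ⟨by omega, hj⟩))
  refine Classical.epsilon_spec (exists_isGreedy_image_eq _ (fun r _ => ?_) hcard)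
  exact (cycDist_injOn n _).mono fun x hx => Set.mem_Iic.2 (mem_Icc.1 (hsub hx)).2

lemma entry_greedyFill {i : Fin n} {j : ℕ} (hj : j ≤ lam i) :
    entry lam σ (greedyFill lam σ p) i j = greedyCols lam σ p j i := by
  cases j with
  | zero => exact entry_zero σ _ i
  | succ j =>
    have hmem : greedyCols lam σ p (j + 1) i ∈ Icc 1 n := by
      have hspec := (greedyCols_spec (σ := σ) hp (hj.trans (le_maxPart lam i))).2
      refine (mem_powersetCard.1 (hp (j + 1) ?_)).1 (hspec ▸ mem_image_of_mem _ ?_)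
      · exact mem_Icc.2 ⟨by omega, hj.trans (le_maxPart lam i)⟩
      · exact mem_filter.2 ⟨mem_univ i, hj⟩
    rw [mem_Icc] at hmem
    rw [entry_succ σ _ (by omega)]
    simp only [greedyFill]
    rw [Nat.mod_eq_of_lt (by omega)]
    omega

lemma coinvFree_greedyFill (hlam : Antitone lam) :
    CoinvFree lam (entry lam σ (greedyFill lam σ p)) := by
  rw [coinvFree_iff_isGreedy hlam]
  intro j r hr r' hr' hlt
  have hj : j + 1 ≤ maxPart lam := (mem_filter.1 hr).2.trans (le_maxPart lam r)
  have hgreedy : IsGreedy (fun r => cycDist n (entry lam σ (greedyFill lam σ p) r j))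
      (colRows lam (j + 1)) (fun r => entry lam σ (greedyFill lam σ p) r (j + 1)) := by
    refine (greedyCols_spec (σ := σ) hp hj).1.congr (fun s hs => ?_) (fun s hs => ?_)
    · have := (mem_filter.1 hs).2
      simp only [entry_greedyFill hp (show j ≤ lam s by omega)]
    · exact (entry_greedyFill hp (mem_filter.1 hs).2).symm
  exact hgreedy r hr r' hr' hlt

lemma colFinset_greedyFill {j : ℕ} (hj : j ∈ Icc 1 (maxPart lam)) :
    colFinset lam σ (greedyFill lam σ p) j = p j := by
  obtain ⟨hj₁, hj₂⟩ := mem_Icc.1 hj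
  obtain ⟨k, rfl⟩ : ∃ k, j = k + 1 := ⟨j - 1, by omega⟩
  rw [colFinset_eq_image, ← (greedyCols_spec hp hj₂).2]
  exact image_congr fun i hi => entry_greedyFill hp (mem_filter.1 hi).2

end Construction

section Weight

variable {lam : Fin n → ℕ} (σ : Fin n → ℕ)

lemma prod_univ_fin_eq_prod_Icc {M : Type*} [CommMonoid M] (m : ℕ) (f : ℕ → M) :
    ∏ k : Fin m, f (k + 1) = ∏ j ∈ Icc 1 m, f j := by
  rw [Fin.prod_univ_eq_prod_range (fun k => f (k + 1)), range_eq_Ico, prod_Ico_add' f 0 m 1]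
  rfl

lemma xwt_eq_prod_colRows (G : Fill n lam) :
    xwt lam G = ∏ j ∈ Icc 1 (maxPart lam), ∏ i ∈ colRows lam j, X (entry lam σ G i j) := by
  have hrow : ∀ i, ∏ k : Fin (lam i), (X ((G i k : ℕ) + 1) : MvPolynomial ℕ (Polynomial ℤ)) =
      ∏ j ∈ Icc 1 (lam i), X (entry lam σ G i j) := fun i => by
    rw [← prod_univ_fin_eq_prod_Icc]
    exact prod_congr rfl fun k _ => by rw [entry_succ σ G k.isLt]
  rw [xwt, prod_congr rfl fun i _ => hrow i]
  refine prod_comm' fun i j => ?_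
  simp only [colRows, mem_univ, mem_filter, mem_Icc, true_and]
  have := le_maxPart lam i
  omega

lemma xwt_eq_prod_colFinset (hlam : Antitone lam) {G : Fill n lam}
    (hG : CoinvFree lam (entry lam σ G)) :
    xwt lam G = ∏ j ∈ Icc 1 (maxPart lam), ∏ v ∈ colFinset lam σ G j, X v := by
  rw [xwt_eq_prod_colRows σ]
  refine prod_congr rfl fun j hj => ?_
  obtain ⟨k, rfl⟩ : ∃ k, j = k + 1 := ⟨j - 1, by have := (mem_Icc.1 hj).1; omega⟩
  rw [colFinset_eq_image, prod_image ((coinvFree_iff_isGreedy hlam G).1 hG k).injOn]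

end Weight

open Classical in
theorem sum_coinvFree_xwt_eq_prod_powersetCard {lam : Fin n → ℕ} (hlam : Antitone lam)
    (σ : Fin n → ℕ) :
    (∑ G : Fill n lam, if CoinvFree lam (entry lam σ G) then xwt lam G else 0) =
      ∏ j ∈ Icc 1 (maxPart lam),
        ∑ S ∈ (Icc 1 n).powersetCard (colRows lam j).card, ∏ v ∈ S, X v := by
  rw [prod_sum, ← sum_filter]
  refine sum_bij (fun G _ j _ => colFinset lam σ G j)
    (fun G hG => mem_pi.2 fun j hj =>
      colFinset_mem_powersetCard hlam (mem_filter.1 hG).2 (mem_Icc.1 hj).1)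
    (fun G hG G' hG' h => eq_of_coinvFree_of_colFinset_eq hlam (mem_filter.1 hG).2
      (mem_filter.1 hG').2 fun j hj => congr_fun₂ h j hj) (fun q hq => ?_)
    (fun G hG => (xwt_eq_prod_colFinset σ hlam (mem_filter.1 hG).2).trans
      (prod_attach _ fun j => ∏ v ∈ colFinset lam σ G j, X v).symm)
  let p j := if h : j ∈ Icc 1 (maxPart lam) then q j h else ∅
  have hp : ∀ j ∈ Icc 1 (maxPart lam), p j ∈ (Icc 1 n).powersetCard (colRows lam j).card :=
    fun j hj => by simpa only [p, dif_pos hj] using mem_pi.1 hq j hj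
  exact ⟨greedyFill lam σ p, mem_filter.2 ⟨mem_univ _, coinvFree_greedyFill hp hlam⟩,
    funext₂ fun j hj => (colFinset_greedyFill hp hj).trans (dif_pos hj)⟩

open Classical in
/-- `E_λ(x; 1, 0) = e_{λ'}(x_1, …, x_n)`: at `q = 1` the generating function of
coinversion-free fillings of partition shape `λ` with key basement equals the
product of the elementary symmetric polynomials indexed by the conjugate partition. -/
theorem E_at_q_one_eq_elementary (n : ℕ) (lam : Fin n → ℕ)
    (hlam : ∀ i j : Fin n, i ≤ j → lam j ≤ lam i) :
    (∑ G : Fill n lam,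
        if CoinvFree lam (entry lam (keyBasement n) G) then xwt lam G else 0) =
      ∏ j ∈ Finset.Icc 1 (maxPart lam),
        ∑ S ∈ (Finset.Icc 1 n).powersetCard
            ((Finset.univ.filter (fun i : Fin n => j ≤ lam i)).card),
          ∏ v ∈ S, MvPolynomial.X v :=
  sum_coinvFree_xwt_eq_prod_powersetCard hlam (keyBasement n)

end Paper
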